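/- Let f, g : ℝ → ℝ be continuous and let u⁻, u⁺, v⁻, v⁺, p_u, p_v be real numbers satisfying the Rankine–Hugoniot conditions g(u⁻) = f(u⁺) and g(v⁻) = f(v⁺). Assume that E_{u⁻,u⁺,p_u}(ξ) ≤ 0 for every ξ ∉ {u⁻, u⁺, p_u} and E_{v⁻,v⁺,p_v}(ξ) ≤ 0 for every ξ ∉ {v⁻, v⁺, p_v}. If u⁻ > v⁻ and u⁺ < v⁺, then f(u⁺) ≥ f(v⁺) or g(u⁻) ≥ g(v⁻). -/
import Mathlib

open Filter Topology Set

/-- Interface entropy production for a stationary shock with left state `wm`,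
right state `wp` and connection value `p`. -/
noncomputable def interfaceEntropyProd (f g : ℝ → ℝ) (wm wp p ξ : ℝ) : ℝ :=
  Real.sign (wp - ξ) * (f wp - f ξ)
    - Real.sign (wm - ξ) * (g wm - g ξ)
    + Real.sign (p - ξ) * (f ξ - g ξ)

/- ### Auxiliary pointwise consequences of the entropy inequality -/

lemma pt1 (f g : ℝ → ℝ) (wm wp p ξ : ℝ) (hRH : g wm = f wp)
    (hE : interfaceEntropyProd f g wm wp p ξ ≤ 0)
    (h1 : wp < ξ) (h2 : ξ < wm) (h3 : p < ξ) : g ξ ≤ f wp := by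
  unfold interfaceEntropyProd at hE
  rw [Real.sign_of_neg (by linarith : wp - ξ < 0),
      Real.sign_of_pos (by linarith : (0:ℝ) < wm - ξ),
      Real.sign_of_neg (by linarith : p - ξ < 0)] at hE
  linarith

lemma pt2 (f g : ℝ → ℝ) (wm wp p ξ : ℝ) (hRH : g wm = f wp)
    (hE : interfaceEntropyProd f g wm wp p ξ ≤ 0)
    (h1 : wp < ξ) (h2 : ξ < wm) (h3 : ξ < p) : f ξ ≤ f wp := by
  unfold interfaceEntropyProd at hE
  rw [Real.sign_of_neg (by linarith : wp - ξ < 0),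
      Real.sign_of_pos (by linarith : (0:ℝ) < wm - ξ),
      Real.sign_of_pos (by linarith : (0:ℝ) < p - ξ)] at hE
  linarith

lemma pt3 (f g : ℝ → ℝ) (wm wp p ξ : ℝ) (hRH : g wm = f wp)
    (hE : interfaceEntropyProd f g wm wp p ξ ≤ 0)
    (h1 : wm < ξ) (h2 : ξ < wp) (h3 : ξ < p) : f wp ≤ g ξ := by
  unfold interfaceEntropyProd at hE
  rw [Real.sign_of_pos (by linarith : (0:ℝ) < wp - ξ),
      Real.sign_of_neg (by linarith : wm - ξ < 0),
      Real.sign_of_pos (by linarith : (0:ℝ) < p - ξ)] at hE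
  linarith

lemma pt4 (f g : ℝ → ℝ) (wm wp p ξ : ℝ) (hRH : g wm = f wp)
    (hE : interfaceEntropyProd f g wm wp p ξ ≤ 0)
    (h1 : wm < ξ) (h2 : ξ < wp) (h3 : p < ξ) : f wp ≤ f ξ := by
  unfold interfaceEntropyProd at hE
  rw [Real.sign_of_pos (by linarith : (0:ℝ) < wp - ξ),
      Real.sign_of_neg (by linarith : wm - ξ < 0),
      Real.sign_of_neg (by linarith : p - ξ < 0)] at hE
  linarith

/- ### One-sided limit helpers -/

lemma evNeLeft (s x : ℝ) : ∀ᶠ ξ in 𝓝[<] x, ξ ≠ s := by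
  rcases lt_or_ge s x with h | h
  · filter_upwards [Ioo_mem_nhdsLT_of_mem ⟨h, le_refl x⟩] with ξ hξ
    exact ne_of_gt hξ.1
  · filter_upwards [self_mem_nhdsWithin] with ξ hξ
    exact ne_of_lt (lt_of_lt_of_le hξ h)

lemma evNeRight (s x : ℝ) : ∀ᶠ ξ in 𝓝[>] x, ξ ≠ s := by
  rcases lt_or_ge x s with h | h
  · filter_upwards [Ioo_mem_nhdsGT_of_mem ⟨le_refl x, h⟩] with ξ hξ
    exact ne_of_lt hξ.2
  · filter_upwards [self_mem_nhdsWithin] with ξ hξ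
    exact ne_of_gt (lt_of_le_of_lt h hξ)

lemma limLeLeft (h : ℝ → ℝ) (hc : Continuous h) (K : ℝ) {c x : ℝ} (hcx : c < x)
    (e1 e2 e3 e4 e5 e6 : ℝ)
    (H : ∀ ξ, c < ξ → ξ < x → ξ ≠ e1 → ξ ≠ e2 → ξ ≠ e3 → ξ ≠ e4 → ξ ≠ e5 → ξ ≠ e6 →
      h ξ ≤ K) : h x ≤ K := by
  have ht : Filter.Tendsto h (𝓝[<] x) (𝓝 (h x)) := (hc.tendsto x).mono_left nhdsWithin_le_nhds
  refine le_of_tendsto ht ?_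
  filter_upwards [Ioo_mem_nhdsLT_of_mem ⟨hcx, le_refl x⟩, evNeLeft e1 x, evNeLeft e2 x,
    evNeLeft e3 x, evNeLeft e4 x, evNeLeft e5 x, evNeLeft e6 x] with ξ hξ n1 n2 n3 n4 n5 n6
  exact H ξ hξ.1 hξ.2 n1 n2 n3 n4 n5 n6

lemma limGeLeft (h : ℝ → ℝ) (hc : Continuous h) (K : ℝ) {c x : ℝ} (hcx : c < x)
    (e1 e2 e3 e4 e5 e6 : ℝ)
    (H : ∀ ξ, c < ξ → ξ < x → ξ ≠ e1 → ξ ≠ e2 → ξ ≠ e3 → ξ ≠ e4 → ξ ≠ e5 → ξ ≠ e6 →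
      K ≤ h ξ) : K ≤ h x := by
  have ht : Filter.Tendsto h (𝓝[<] x) (𝓝 (h x)) := (hc.tendsto x).mono_left nhdsWithin_le_nhds
  refine ge_of_tendsto ht ?_
  filter_upwards [Ioo_mem_nhdsLT_of_mem ⟨hcx, le_refl x⟩, evNeLeft e1 x, evNeLeft e2 x,
    evNeLeft e3 x, evNeLeft e4 x, evNeLeft e5 x, evNeLeft e6 x] with ξ hξ n1 n2 n3 n4 n5 n6
  exact H ξ hξ.1 hξ.2 n1 n2 n3 n4 n5 n6

lemma limLeRight (h : ℝ → ℝ) (hc : Continuous h) (K : ℝ) {x d : ℝ} (hxd : x < d)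
    (e1 e2 e3 e4 e5 e6 : ℝ)
    (H : ∀ ξ, x < ξ → ξ < d → ξ ≠ e1 → ξ ≠ e2 → ξ ≠ e3 → ξ ≠ e4 → ξ ≠ e5 → ξ ≠ e6 →
      h ξ ≤ K) : h x ≤ K := by
  have ht : Filter.Tendsto h (𝓝[>] x) (𝓝 (h x)) := (hc.tendsto x).mono_left nhdsWithin_le_nhds
  refine le_of_tendsto ht ?_
  filter_upwards [Ioo_mem_nhdsGT_of_mem ⟨le_refl x, hxd⟩, evNeRight e1 x, evNeRight e2 x,
    evNeRight e3 x, evNeRight e4 x, evNeRight e5 x, evNeRight e6 x] with ξ hξ n1 n2 n3 n4 n5 n6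
  exact H ξ hξ.1 hξ.2 n1 n2 n3 n4 n5 n6

lemma limGeRight (h : ℝ → ℝ) (hc : Continuous h) (K : ℝ) {x d : ℝ} (hxd : x < d)
    (e1 e2 e3 e4 e5 e6 : ℝ)
    (H : ∀ ξ, x < ξ → ξ < d → ξ ≠ e1 → ξ ≠ e2 → ξ ≠ e3 → ξ ≠ e4 → ξ ≠ e5 → ξ ≠ e6 →
      K ≤ h ξ) : K ≤ h x := by
  have ht : Filter.Tendsto h (𝓝[>] x) (𝓝 (h x)) := (hc.tendsto x).mono_left nhdsWithin_le_nhds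
  refine ge_of_tendsto ht ?_
  filter_upwards [Ioo_mem_nhdsGT_of_mem ⟨le_refl x, hxd⟩, evNeRight e1 x, evNeRight e2 x,
    evNeRight e3 x, evNeRight e4 x, evNeRight e5 x, evNeRight e6 x] with ξ hξ n1 n2 n3 n4 n5 n6
  exact H ξ hξ.1 hξ.2 n1 n2 n3 n4 n5 n6

lemma existsAvoid {c d : ℝ} (h : c < d) (e1 e2 e3 e4 e5 e6 : ℝ) :
    ∃ ξ, c < ξ ∧ ξ < d ∧ ξ ≠ e1 ∧ ξ ≠ e2 ∧ ξ ≠ e3 ∧ ξ ≠ e4 ∧ ξ ≠ e5 ∧ ξ ≠ e6 := by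
  obtain ⟨ξ, hmem, hnot⟩ :=
    (Set.Ioo_infinite h).exists_notMem_finset {e1, e2, e3, e4, e5, e6}
  simp only [Finset.mem_insert, Finset.mem_singleton, not_or] at hnot
  exact ⟨ξ, hmem.1, hmem.2, hnot.1, hnot.2.1, hnot.2.2.1, hnot.2.2.2.1, hnot.2.2.2.2.1,
    hnot.2.2.2.2.2⟩

/-- In the crossing configuration `u⁻ > v⁻`, `u⁺ < v⁺`, two admissible interface
shocks satisfy `f(u⁺) ≥ f(v⁺)` or `g(u⁻) ≥ g(v⁻)`. -/
theorem stmt_13 (f g : ℝ → ℝ) (hf : Continuous f) (hg : Continuous g)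
    (um up vm vp pu pv : ℝ)
    (hRHu : g um = f up) (hRHv : g vm = f vp)
    (hEu : ∀ ξ : ℝ, ξ ≠ um → ξ ≠ up → ξ ≠ pu → interfaceEntropyProd f g um up pu ξ ≤ 0)
    (hEv : ∀ ξ : ℝ, ξ ≠ vm → ξ ≠ vp → ξ ≠ pv → interfaceEntropyProd f g vm vp pv ξ ≤ 0)
    (h1 : um > vm) (h2 : up < vp) :
    f up ≥ f vp ∨ g um ≥ g vm := by
  by_contra hcon
  push_neg at hcon
  obtain ⟨hab, -⟩ := hcon
  -- Step P1 : up < um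
  have hP1 : up < um := by
    by_contra hle
    push_neg at hle
    have hpv : pv < um := by
      by_contra hge
      push_neg at hge
      have hkey : f vp ≤ g um := by
        refine limGeLeft g hg (f vp) h1 um up pu vm vp pv ?_
        intro ξ hc hx n1 n2 n3 n4 n5 n6
        exact pt3 f g vm vp pv ξ hRHv (hEv ξ n4 n5 n6) hc (by linarith) (by linarith)
      linarith
    have hkey : f vp ≤ f up := by
      have hcx : max pv vm < up := max_lt (by linarith) (by linarith)
      refine limGeLeft f hf (f vp) hcx um up pu vm vp pv ?_
      intro ξ hc hx n1 n2 n3 n4 n5 n6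
      have hvm : vm < ξ := lt_of_le_of_lt (le_max_right pv vm) hc
      have hpv' : pv < ξ := lt_of_le_of_lt (le_max_left pv vm) hc
      exact pt4 f g vm vp pv ξ hRHv (hEv ξ n4 n5 n6) hvm (by linarith) hpv'
    linarith
  -- Step P2 : vm < vp
  have hP2 : vm < vp := by
    by_contra hle
    push_neg at hle
    have hpu : vm < pu := by
      by_contra hge
      push_neg at hge
      have hkey : g vm ≤ f up := by
        refine limLeRight g hg (f up) h1 um up pu vm vp pv ?_
        intro ξ hc hx n1 n2 n3 n4 n5 n6
        exact pt1 f g um up pu ξ hRHu (hEu ξ n1 n2 n3) (by linarith) hx (by linarith)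
      linarith
    have hkey : f vp ≤ f up := by
      refine limLeLeft f hf (f up) h2 um up pu vm vp pv ?_
      intro ξ hc hx n1 n2 n3 n4 n5 n6
      exact pt2 f g um up pu ξ hRHu (hEu ξ n1 n2 n3) hc (by linarith) (by linarith)
    linarith
  rcases lt_or_ge um vp with hA | hvpum
  · -- Case A : um < vp
    have hpv : pv < um := by
      by_contra hge
      push_neg at hge
      have hkey : f vp ≤ g um := by
        refine limGeLeft g hg (f vp) h1 um up pu vm vp pv ?_
        intro ξ hc hx n1 n2 n3 n4 n5 n6
        exact pt3 f g vm vp pv ξ hRHv (hEv ξ n4 n5 n6) hc (by linarith) (by linarith)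
      linarith
    have hLum : max (max vm up) pv < um := max_lt (max_lt h1 hP1) hpv
    have hA2 : ∀ ξ, max (max vm up) pv < ξ → ξ < um → ξ ≠ um → ξ ≠ up → ξ ≠ pu →
        ξ ≠ vm → ξ ≠ vp → ξ ≠ pv → f vp ≤ f ξ := by
      intro ξ hc hx n1 n2 n3 n4 n5 n6
      have hvm : vm < ξ := lt_of_le_of_lt (le_trans (le_max_left vm up) (le_max_left _ pv)) hc
      have hpv' : pv < ξ := lt_of_le_of_lt (le_max_right _ pv) hc
      exact pt4 f g vm vp pv ξ hRHv (hEv ξ n4 n5 n6) hvm (by linarith) hpv'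
    have hpuL : pu ≤ max (max vm up) pv := by
      by_contra hgt
      push_neg at hgt
      obtain ⟨ξ, hc, hx, n1, n2, n3, n4, n5, n6⟩ :=
        existsAvoid (lt_min hgt hLum) um up pu vm vp pv
      have hup : up < ξ :=
        lt_of_le_of_lt (le_trans (le_max_right vm up) (le_max_left _ pv)) hc
      have h5 : f ξ ≤ f up := pt2 f g um up pu ξ hRHu (hEu ξ n1 n2 n3) hup
        (lt_of_lt_of_le hx (min_le_right _ _)) (lt_of_lt_of_le hx (min_le_left _ _))
      have h6 : f vp ≤ f ξ := hA2 ξ hc (lt_of_lt_of_le hx (min_le_right _ _)) n1 n2 n3 n4 n5 n6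
      linarith
    rcases le_or_gt pv (max vm up) with hpvle | hpvgt
    · rcases le_or_gt vm up with hvu | huv
      · -- L = up
        have hpvup : pv ≤ up := le_trans hpvle (max_le hvu le_rfl)
        have hkey : f vp ≤ f up := by
          refine limGeRight f hf (f vp) hP1 um up pu vm vp pv ?_
          intro ξ hc hx n1 n2 n3 n4 n5 n6
          exact hA2 ξ (max_lt (max_lt (by linarith) hc) (by linarith)) hx n1 n2 n3 n4 n5 n6
        linarith
      · -- L = vm
        have hm1 : max vm up = vm := max_eq_left huv.le
        have hpvvm : pv ≤ vm := hm1 ▸ hpvle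
        have hmax : max (max vm up) pv = vm := by rw [hm1]; exact max_eq_left hpvvm
        have hpuvm : pu ≤ vm := hmax ▸ hpuL
        have hkey : g vm ≤ f up := by
          refine limLeRight g hg (f up) h1 um up pu vm vp pv ?_
          intro ξ hc hx n1 n2 n3 n4 n5 n6
          exact pt1 f g um up pu ξ hRHu (hEu ξ n1 n2 n3) (by linarith) hx (by linarith)
        linarith
    · -- L = pv
      have hmax : max (max vm up) pv = pv := max_eq_right hpvgt.le
      have hpupv : pu ≤ pv := hmax ▸ hpuL
      have hg1 : g pv ≤ f up := by
        refine limLeRight g hg (f up) hpv um up pu vm vp pv ?_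
        intro ξ hc hx n1 n2 n3 n4 n5 n6
        have hup : up < ξ := by
          have := le_max_right vm up
          linarith
        exact pt1 f g um up pu ξ hRHu (hEu ξ n1 n2 n3) hup hx (by linarith)
      have hg2 : f vp ≤ g pv := by
        refine limGeLeft g hg (f vp) hpvgt um up pu vm vp pv ?_
        intro ξ hc hx n1 n2 n3 n4 n5 n6
        have hvm : vm < ξ := lt_of_le_of_lt (le_max_left vm up) hc
        exact pt3 f g vm vp pv ξ hRHv (hEv ξ n4 n5 n6) hvm (by linarith) hx
      linarith
  · rcases le_or_gt vm up with hC | hB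
    · -- Case C : vm ≤ up ≤ up < vp ≤ um
      rcases le_or_gt vp pu with hCI | hpu1
      · have hkey : f vp ≤ f up := by
          refine limLeLeft f hf (f up) h2 um up pu vm vp pv ?_
          intro ξ hc hx n1 n2 n3 n4 n5 n6
          exact pt2 f g um up pu ξ hRHu (hEu ξ n1 n2 n3) hc (by linarith) (by linarith)
        linarith
      · rcases le_or_gt pu up with hCII | hpu2
        · -- C-II : pu ≤ up
          have hgle : ∀ ξ, up < ξ → ξ < vp → ξ ≠ um → ξ ≠ up → ξ ≠ pu → ξ ≠ vm → ξ ≠ vp →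
              ξ ≠ pv → g ξ ≤ f up := by
            intro ξ hc hx n1 n2 n3 n4 n5 n6
            exact pt1 f g um up pu ξ hRHu (hEu ξ n1 n2 n3) hc (by linarith) (by linarith)
          rcases le_or_gt vp pv with hi | hpv1
          · obtain ⟨ξ, hc, hx, n1, n2, n3, n4, n5, n6⟩ := existsAvoid h2 um up pu vm vp pv
            have e1 := hgle ξ hc hx n1 n2 n3 n4 n5 n6
            have e2 : f vp ≤ g ξ := pt3 f g vm vp pv ξ hRHv (hEv ξ n4 n5 n6)
              (by linarith) hx (by linarith)
            linarith
          · rcases le_or_gt pv up with hii | hpv2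
            · have hkey : f vp ≤ f up := by
                refine limGeRight f hf (f vp) h2 um up pu vm vp pv ?_
                intro ξ hc hx n1 n2 n3 n4 n5 n6
                exact pt4 f g vm vp pv ξ hRHv (hEv ξ n4 n5 n6) (by linarith) hx (by linarith)
              linarith
            · obtain ⟨ξ, hc, hx, n1, n2, n3, n4, n5, n6⟩ := existsAvoid hpv2 um up pu vm vp pv
              have e1 := hgle ξ hc (by linarith) n1 n2 n3 n4 n5 n6
              have e2 : f vp ≤ g ξ := pt3 f g vm vp pv ξ hRHv (hEv ξ n4 n5 n6)
                (by linarith) (by linarith) hx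
              linarith
        · -- C-III : up < pu < vp
          have hfle : ∀ ξ, up < ξ → ξ < pu → ξ ≠ um → ξ ≠ up → ξ ≠ pu → ξ ≠ vm → ξ ≠ vp →
              ξ ≠ pv → f ξ ≤ f up := by
            intro ξ hc hx n1 n2 n3 n4 n5 n6
            exact pt2 f g um up pu ξ hRHu (hEu ξ n1 n2 n3) hc (by linarith) hx
          have hgle : ∀ ξ, pu < ξ → ξ < vp → ξ ≠ um → ξ ≠ up → ξ ≠ pu → ξ ≠ vm → ξ ≠ vp →
              ξ ≠ pv → g ξ ≤ f up := by
            intro ξ hc hx n1 n2 n3 n4 n5 n6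
            exact pt1 f g um up pu ξ hRHu (hEu ξ n1 n2 n3) (by linarith) (by linarith) hc
          rcases le_or_gt vp pv with hi | hpv1
          · obtain ⟨ξ, hc, hx, n1, n2, n3, n4, n5, n6⟩ := existsAvoid hpu1 um up pu vm vp pv
            have e1 := hgle ξ hc hx n1 n2 n3 n4 n5 n6
            have e2 : f vp ≤ g ξ := pt3 f g vm vp pv ξ hRHv (hEv ξ n4 n5 n6)
              (by linarith) hx (by linarith)
            linarith
          · rcases le_or_gt pv up with hii | hpv2
            · obtain ⟨ξ, hc, hx, n1, n2, n3, n4, n5, n6⟩ := existsAvoid hpu2 um up pu vm vp pv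
              have e1 := hfle ξ hc hx n1 n2 n3 n4 n5 n6
              have e2 : f vp ≤ f ξ := pt4 f g vm vp pv ξ hRHv (hEv ξ n4 n5 n6)
                (by linarith) (by linarith) (by linarith)
              linarith
            · rcases lt_trichotomy pu pv with hlt | heq | hgt
              · obtain ⟨ξ, hc, hx, n1, n2, n3, n4, n5, n6⟩ := existsAvoid hlt um up pu vm vp pv
                have e1 := hgle ξ hc (by linarith) n1 n2 n3 n4 n5 n6
                have e2 : f vp ≤ g ξ := pt3 f g vm vp pv ξ hRHv (hEv ξ n4 n5 n6)
                  (by linarith) (by linarith) hx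
                linarith
              · -- pu = pv
                have hg2 : f vp ≤ g pu := by
                  refine limGeLeft g hg (f vp) hpu2 um up pu vm vp pv ?_
                  intro ξ hc hx n1 n2 n3 n4 n5 n6
                  exact pt3 f g vm vp pv ξ hRHv (hEv ξ n4 n5 n6) (by linarith) (by linarith)
                    (by rw [← heq]; exact hx)
                have hg1 : g pu ≤ f up := by
                  refine limLeRight g hg (f up) hpu1 um up pu vm vp pv ?_
                  intro ξ hc hx n1 n2 n3 n4 n5 n6
                  exact hgle ξ hc hx n1 n2 n3 n4 n5 n6
                linarith
              · obtain ⟨ξ, hc, hx, n1, n2, n3, n4, n5, n6⟩ := existsAvoid hgt um up pu vm vp pv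
                have e1 := hfle ξ (by linarith) hx n1 n2 n3 n4 n5 n6
                have e2 : f vp ≤ f ξ := pt4 f g vm vp pv ξ hRHv (hEv ξ n4 n5 n6)
                  (by linarith) (by linarith) hc
                linarith
    · -- Case B : up < vm, vp ≤ um
      have hpu : vm < pu := by
        by_contra hge
        push_neg at hge
        have hkey : g vm ≤ f up := by
          refine limLeRight g hg (f up) hP2 um up pu vm vp pv ?_
          intro ξ hc hx n1 n2 n3 n4 n5 n6
          exact pt1 f g um up pu ξ hRHu (hEu ξ n1 n2 n3) (by linarith) (by linarith)
            (by linarith)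
        linarith
      have hvmM : vm < min vp pu := lt_min hP2 hpu
      have hB2 : ∀ ξ, vm < ξ → ξ < min vp pu → ξ ≠ um → ξ ≠ up → ξ ≠ pu → ξ ≠ vm → ξ ≠ vp →
          ξ ≠ pv → f ξ ≤ f up := by
        intro ξ hc hx n1 n2 n3 n4 n5 n6
        have h5 : ξ < vp := lt_of_lt_of_le hx (min_le_left _ _)
        have h6 : ξ < pu := lt_of_lt_of_le hx (min_le_right _ _)
        exact pt2 f g um up pu ξ hRHu (hEu ξ n1 n2 n3) (by linarith) (by linarith) h6
      have hpvM : min vp pu ≤ pv := by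
        by_contra hlt
        push_neg at hlt
        obtain ⟨ξ, hc, hx, n1, n2, n3, n4, n5, n6⟩ :=
          existsAvoid (max_lt hvmM hlt : max vm pv < min vp pu) um up pu vm vp pv
        have hvm : vm < ξ := lt_of_le_of_lt (le_max_left _ _) hc
        have hpv : pv < ξ := lt_of_le_of_lt (le_max_right _ _) hc
        have e1 := hB2 ξ hvm hx n1 n2 n3 n4 n5 n6
        have e2 : f vp ≤ f ξ := pt4 f g vm vp pv ξ hRHv (hEv ξ n4 n5 n6) hvm
          (lt_of_lt_of_le hx (min_le_left _ _)) hpv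
        linarith
      rcases le_or_gt vp pu with hM | hM
      · -- min = vp
        have hkey : f vp ≤ f up := by
          refine limLeLeft f hf (f up) hP2 um up pu vm vp pv ?_
          intro ξ hc hx n1 n2 n3 n4 n5 n6
          exact hB2 ξ hc (lt_min hx (by linarith)) n1 n2 n3 n4 n5 n6
        linarith
      · -- min = pu, pu < vp
        have hminpu : min vp pu = pu := min_eq_right hM.le
        have hpupv : pu ≤ pv := hminpu ▸ hpvM
        have hg2 : f vp ≤ g pu := by
          refine limGeLeft g hg (f vp) hpu um up pu vm vp pv ?_
          intro ξ hc hx n1 n2 n3 n4 n5 n6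
          exact pt3 f g vm vp pv ξ hRHv (hEv ξ n4 n5 n6) hc (by linarith) (by linarith)
        have hg1 : g pu ≤ f up := by
          refine limLeRight g hg (f up) hM um up pu vm vp pv ?_
          intro ξ hc hx n1 n2 n3 n4 n5 n6
          exact pt1 f g um up pu ξ hRHu (hEu ξ n1 n2 n3) (by linarith) (by linarith) hc
        linarith
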